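/- arXiv:2503.20848 — 3 statements merged into one kernel-verified Lean document; each statement's English description precedes it below -/
import Mathlib

section
/- In the AI regulation game with quadratic costs and no regulation, assume C1 is invertible. Let γ0 = (α0, β0) ∈ ℝ² and let γ1* = (α1*, β1*) maximize γ1 ↦ U_D(γ0, γ1) over the feasible set {(α, β) ∈ ℝ² : α ≥ α0 and β ≥ β0}. Then γ1* belongs to the four-element candidate set { γ0 + ((1−δ)/2)·C1⁻¹·r, (α0, β0 + (1−δ)·rβ/(2·c1bb)), (α0 + (1−δ)·rα/(2·c1aa), β0), (α0, β0) }. -/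
open Matrix

/-- The domain specialist's utility
`U_D(γ0, γ1) = (1−δ)·(rα·α1 + rβ·β1) − (γ1−γ0)ᵀ C1 (γ1−γ0)`. -/
noncomputable def UD (c1aa c1ab c1bb rα rβ δ : ℝ) (γ0 γ1 : Fin 2 → ℝ) : ℝ :=
  (1 - δ) * (rα * γ1 0 + rβ * γ1 1)
    - (γ1 - γ0) ⬝ᵥ ((!![c1aa, c1ab; c1ab, c1bb] : Matrix (Fin 2) (Fin 2) ℝ) *ᵥ (γ1 - γ0))

lemma quad_max_aux (c A x : ℝ) (hc : 0 < c) (hx : 0 < x)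
    (h : ∀ t : ℝ, -x ≤ t → A * t - c * t ^ 2 ≤ 0) : A = 0 := by
  by_contra hA
  rcases lt_or_gt_of_ne hA with hneg | hpos
  · rcases le_or_gt (-x) (A / (2 * c)) with h1 | h1
    · have h2 := h (A / (2 * c)) h1
      have h3 : A * (A / (2 * c)) - c * (A / (2 * c)) ^ 2 = A ^ 2 / (4 * c) := by
        field_simp; ring
      rw [h3] at h2
      have h5 : A ^ 2 ≤ 0 := by
        have h6 := mul_le_mul_of_nonneg_right h2 (by positivity : (0:ℝ) ≤ 4 * c)
        rw [div_mul_cancel₀ _ (by positivity : (4:ℝ) * c ≠ 0)] at h6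
        linarith
      nlinarith [mul_pos (neg_pos.2 hneg) (neg_pos.2 hneg)]
    · have h2 := h (-x) le_rfl
      have h4 : A < -(2 * c) * x := by
        have := (div_lt_iff₀ (by positivity : (0:ℝ) < 2 * c)).1 h1
        nlinarith
      nlinarith
  · have hpos' : -x ≤ A / (2 * c) := by
      have : (0:ℝ) < A / (2 * c) := by positivity
      linarith
    have h2 := h (A / (2 * c)) hpos'
    have h3 : A * (A / (2 * c)) - c * (A / (2 * c)) ^ 2 = A ^ 2 / (4 * c) := by
      field_simp; ring
    rw [h3] at h2
    have h5 : A ^ 2 ≤ 0 := by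
      have h6 := mul_le_mul_of_nonneg_right h2 (by positivity : (0:ℝ) ≤ 4 * c)
      rw [div_mul_cancel₀ _ (by positivity : (4:ℝ) * c ≠ 0)] at h6
      linarith
    nlinarith [mul_pos hpos hpos]

lemma UD_eq (c1aa c1ab c1bb rα rβ δ : ℝ) (γ0 γ1 : Fin 2 → ℝ) :
    UD c1aa c1ab c1bb rα rβ δ γ0 γ1 =
      (1 - δ) * (rα * γ1 0 + rβ * γ1 1)
        - (c1aa * (γ1 0 - γ0 0) ^ 2 + 2 * c1ab * (γ1 0 - γ0 0) * (γ1 1 - γ0 1)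
            + c1bb * (γ1 1 - γ0 1) ^ 2) := by
  simp [UD, mulVec, dotProduct, Fin.sum_univ_two]
  ring


/-- Under no regulation, any maximizer of the specialist's utility over the feasible set
`{(α, β) : α ≥ α0, β ≥ β0}` belongs to the four-element candidate set. -/
theorem specialist_best_response_candidates_noreg
    (c0aa c0bb c0ab c1aa c1bb c1ab rα rβ δ : ℝ)
    (hc0aa : 0 < c0aa) (hc0bb : 0 < c0bb) (hc1aa : 0 < c1aa) (hc1bb : 0 < c1bb)
    (hrα : 0 < rα) (hrβ : 0 < rβ) (hδ0 : 0 < δ) (hδ1 : δ < 1)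
    (hC1inv : IsUnit (!![c1aa, c1ab; c1ab, c1bb] : Matrix (Fin 2) (Fin 2) ℝ).det)
    (γ0 γ1s : Fin 2 → ℝ)
    (hfeas : γ0 0 ≤ γ1s 0 ∧ γ0 1 ≤ γ1s 1)
    (hmax : ∀ γ1 : Fin 2 → ℝ, γ0 0 ≤ γ1 0 → γ0 1 ≤ γ1 1 →
      UD c1aa c1ab c1bb rα rβ δ γ0 γ1 ≤ UD c1aa c1ab c1bb rα rβ δ γ0 γ1s) :
    γ1s = γ0 + ((1 - δ) / 2) •
        ((!![c1aa, c1ab; c1ab, c1bb] : Matrix (Fin 2) (Fin 2) ℝ)⁻¹ *ᵥ ![rα, rβ]) ∨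
    γ1s = ![γ0 0, γ0 1 + (1 - δ) * rβ / (2 * c1bb)] ∨
    γ1s = ![γ0 0 + (1 - δ) * rα / (2 * c1aa), γ0 1] ∨
    γ1s = γ0 := by
  obtain ⟨hf1, hf2⟩ := hfeas
  have hx0 : 0 ≤ γ1s 0 - γ0 0 := by linarith
  have hy0 : 0 ≤ γ1s 1 - γ0 1 := by linarith
  -- stationarity in the first coordinate when the constraint is inactive
  have hA : 0 < γ1s 0 - γ0 0 →
      (1 - δ) * rα - 2 * c1aa * (γ1s 0 - γ0 0) - 2 * c1ab * (γ1s 1 - γ0 1) = 0 := by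
    intro hx
    apply quad_max_aux c1aa _ _ hc1aa hx
    intro t ht
    have hfe1 : γ0 0 ≤ γ1s 0 + t := by linarith
    have h := hmax ![γ1s 0 + t, γ1s 1] (by simpa using hfe1) (by simpa using hf2)
    rw [UD_eq, UD_eq] at h
    simp only [Matrix.cons_val_zero, Matrix.cons_val_one, Matrix.head_cons] at h
    nlinarith [h]
  have hB : 0 < γ1s 1 - γ0 1 →
      (1 - δ) * rβ - 2 * c1ab * (γ1s 0 - γ0 0) - 2 * c1bb * (γ1s 1 - γ0 1) = 0 := by
    intro hy
    apply quad_max_aux c1bb _ _ hc1bb hy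
    intro t ht
    have hfe1 : γ0 1 ≤ γ1s 1 + t := by linarith
    have h := hmax ![γ1s 0, γ1s 1 + t] (by simpa using hf1) (by simpa using hfe1)
    rw [UD_eq, UD_eq] at h
    simp only [Matrix.cons_val_zero, Matrix.cons_val_one, Matrix.head_cons] at h
    nlinarith [h]
  rcases hx0.eq_or_lt with hxz | hxp <;> rcases hy0.eq_or_lt with hyz | hyp
  · -- both constraints active : γ1s = γ0
    right; right; right
    funext i
    fin_cases i
    · show γ1s 0 = γ0 0; linarith
    · show γ1s 1 = γ0 1; linarith
  · -- first active, second inactive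
    right; left
    have hBy := hB hyp
    funext i
    fin_cases i
    · show γ1s 0 = γ0 0; linarith
    · show γ1s 1 = γ0 1 + (1 - δ) * rβ / (2 * c1bb)
      have h2 : γ1s 1 - γ0 1 = (1 - δ) * rβ / (2 * c1bb) := by
        rw [eq_div_iff (by positivity : (2 : ℝ) * c1bb ≠ 0)]
        linear_combination (-1 : ℝ) * hBy + (2 * c1ab) * hxz
      linarith
  · -- second active, first inactive
    right; right; left
    have hAx := hA hxp
    funext i
    fin_cases i
    · show γ1s 0 = γ0 0 + (1 - δ) * rα / (2 * c1aa)
      have h2 : γ1s 0 - γ0 0 = (1 - δ) * rα / (2 * c1aa) := by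
        rw [eq_div_iff (by positivity : (2 : ℝ) * c1aa ≠ 0)]
        linear_combination (-1 : ℝ) * hAx + (2 * c1ab) * hyz
      linarith
    · show γ1s 1 = γ0 1; linarith
  · -- interior case
    left
    have hAx := hA hxp
    have hBy := hB hyp
    have hCv : (!![c1aa, c1ab; c1ab, c1bb] : Matrix (Fin 2) (Fin 2) ℝ) *ᵥ (γ1s - γ0)
        = ((1 - δ) / 2) • ![rα, rβ] := by
      funext i
      fin_cases i <;>
        simp [mulVec, dotProduct, Fin.sum_univ_two, Pi.sub_apply] <;> linarith
    have hv : γ1s - γ0 = ((1 - δ) / 2) •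
        ((!![c1aa, c1ab; c1ab, c1bb] : Matrix (Fin 2) (Fin 2) ℝ)⁻¹ *ᵥ ![rα, rβ]) := by
      have h := congrArg (fun w => (!![c1aa, c1ab; c1ab, c1bb] :
        Matrix (Fin 2) (Fin 2) ℝ)⁻¹ *ᵥ w) hCv
      simpa only [mulVec_mulVec, Matrix.nonsing_inv_mul _ hC1inv, one_mulVec,
        mulVec_smul] using h
    rw [← hv]
    abel
end

section
/- In the AI regulation game with quadratic costs and no regulation, assume C0 and C1 are invertible, and let w := ((1−δ)/2)·C1⁻¹·r be the specialist's unconstrained contribution. Define the generalist's composed utility g(γ0) := δ·(r ⬝ᵥ (γ0 + w)) − γ0ᵀ C0 γ0. If γ0* = (α0*, β0*) maximizes g over the quadrant {(α, β) ∈ ℝ² : α ≥ 0 and β ≥ 0}, then γ0* belongs to the four-element candidate set { (δ/2)·C0⁻¹·r, (0, δ·rβ/(2·c0bb)), (δ·rα/(2·c0aa), 0), (0, 0) }. -/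
open Matrix

/-- The generalist's composed utility `g(γ0) = δ·(r ⬝ᵥ (γ0 + w)) − γ0ᵀ C0 γ0`, where
`w` is the specialist's unconstrained contribution. -/
noncomputable def gComp (c0aa c0ab c0bb rα rβ δ : ℝ) (w γ0 : Fin 2 → ℝ) : ℝ :=
  δ * ((![rα, rβ] : Fin 2 → ℝ) ⬝ᵥ (γ0 + w))
    - γ0 ⬝ᵥ ((!![c0aa, c0ab; c0ab, c0bb] : Matrix (Fin 2) (Fin 2) ℝ) *ᵥ γ0)

/-- First-order condition: if `A·t − c·t² ≤ 0` for all feasible `t ≥ −x` with `x > 0`,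
then `A = 0`. -/
lemma foc_zero (A c x : ℝ) (hc : 0 < c) (hx : 0 < x)
    (h : ∀ t : ℝ, -x ≤ t → A * t - c * t ^ 2 ≤ 0) : A = 0 := by
  by_contra hA
  rcases lt_or_gt_of_ne hA with hneg | hpos
  · set t := max (-x) (A / (2 * c)) with htdef
    have ht := h t (le_max_left _ _)
    have h1 : t < 0 :=
      max_lt (by linarith) (div_neg_of_neg_of_pos hneg (by linarith))
    have h2 : A / (2 * c) ≤ t := le_max_right _ _
    have h3 : A ≤ 2 * c * t := by
      rw [div_le_iff₀ (by linarith)] at h2; linarith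
    -- A*t - c*t² = t*(A - c*t) ≥ t*(c*t) = c*t² > 0
    nlinarith [mul_pos (mul_pos hc (neg_pos.mpr h1)) (neg_pos.mpr h1),
      mul_le_mul_of_nonpos_left (by linarith : A - c * t ≤ c * t) (le_of_lt h1)]
  · have h0 : (0:ℝ) ≤ A / (2 * c) := by positivity
    have ht := h (A / (2 * c)) (le_trans (by linarith) h0)
    have key : A * (A / (2 * c)) - c * (A / (2 * c)) ^ 2 = A ^ 2 / (4 * c) := by
      field_simp; ring
    rw [key] at ht
    have : 0 < A ^ 2 / (4 * c) := by positivity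
    linarith

/-- Under no regulation, any maximizer of the generalist's composed utility over the
quadrant `{(α, β) : α ≥ 0, β ≥ 0}` belongs to the four-element candidate set. -/
theorem generalist_best_response_candidates_noreg
    (c0aa c0bb c0ab c1aa c1bb c1ab rα rβ δ : ℝ)
    (hc0aa : 0 < c0aa) (hc0bb : 0 < c0bb) (hc1aa : 0 < c1aa) (hc1bb : 0 < c1bb)
    (hrα : 0 < rα) (hrβ : 0 < rβ) (hδ0 : 0 < δ) (hδ1 : δ < 1)
    (hC0inv : IsUnit (!![c0aa, c0ab; c0ab, c0bb] : Matrix (Fin 2) (Fin 2) ℝ).det)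
    (hC1inv : IsUnit (!![c1aa, c1ab; c1ab, c1bb] : Matrix (Fin 2) (Fin 2) ℝ).det)
    (γ0s : Fin 2 → ℝ)
    (hfeas : 0 ≤ γ0s 0 ∧ 0 ≤ γ0s 1)
    (hmax : ∀ γ0 : Fin 2 → ℝ, 0 ≤ γ0 0 → 0 ≤ γ0 1 →
      gComp c0aa c0ab c0bb rα rβ δ
          (((1 - δ) / 2) •
            ((!![c1aa, c1ab; c1ab, c1bb] : Matrix (Fin 2) (Fin 2) ℝ)⁻¹ *ᵥ ![rα, rβ])) γ0 ≤
        gComp c0aa c0ab c0bb rα rβ δ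
          (((1 - δ) / 2) •
            ((!![c1aa, c1ab; c1ab, c1bb] : Matrix (Fin 2) (Fin 2) ℝ)⁻¹ *ᵥ ![rα, rβ])) γ0s) :
    γ0s = (δ / 2) • ((!![c0aa, c0ab; c0ab, c0bb] : Matrix (Fin 2) (Fin 2) ℝ)⁻¹ *ᵥ ![rα, rβ]) ∨
    γ0s = ![0, δ * rβ / (2 * c0bb)] ∨
    γ0s = ![δ * rα / (2 * c0aa), 0] ∨
    γ0s = ![0, 0] := by
  obtain ⟨hx0, hy0⟩ := hfeas
  set x := γ0s 0 with hxdef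
  set y := γ0s 1 with hydef
  set w := (((1 - δ) / 2) •
      ((!![c1aa, c1ab; c1ab, c1bb] : Matrix (Fin 2) (Fin 2) ℝ)⁻¹ *ᵥ ![rα, rβ])) with hw
  have hγ : γ0s = ![x, y] := by
    funext i; fin_cases i <;> simp [hxdef, hydef]
  -- FOC in the first coordinate, when x > 0
  have focx : 0 < x → δ * rα - 2 * c0aa * x - 2 * c0ab * y = 0 := by
    intro hx
    apply foc_zero _ c0aa x hc0aa hx
    intro t ht
    have := hmax ![x + t, y] (by simp; linarith) (by simpa using hy0)
    rw [hγ] at this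
    simp only [gComp, dotProduct, Matrix.mulVec, Fin.sum_univ_two, Pi.add_apply,
      Matrix.cons_val_zero, Matrix.cons_val_one, Matrix.head_cons,
      Matrix.cons_val', Matrix.empty_val', Matrix.cons_val_fin_one,
      Matrix.vecHead, Matrix.of_apply] at this
    nlinarith [this]
  -- FOC in the second coordinate, when y > 0
  have focy : 0 < y → δ * rβ - 2 * c0ab * x - 2 * c0bb * y = 0 := by
    intro hy
    apply foc_zero _ c0bb y hc0bb hy
    intro t ht
    have := hmax ![x, y + t] (by simpa using hx0) (by simp; linarith)
    rw [hγ] at this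
    simp only [gComp, dotProduct, Matrix.mulVec, Fin.sum_univ_two, Pi.add_apply,
      Matrix.cons_val_zero, Matrix.cons_val_one, Matrix.head_cons,
      Matrix.cons_val', Matrix.empty_val', Matrix.cons_val_fin_one,
      Matrix.vecHead, Matrix.of_apply] at this
    nlinarith [this]
  rcases eq_or_lt_of_le hx0 with hx | hx
  · rcases eq_or_lt_of_le hy0 with hy | hy
    · -- x = 0, y = 0
      right; right; right
      rw [hγ, ← hx, ← hy]
    · -- x = 0, y > 0
      right; left
      have h2 := focy hy
      rw [← hx] at h2
      have hyv : y = δ * rβ / (2 * c0bb) := by field_simp; linarith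
      rw [hγ, ← hx, hyv]
  · rcases eq_or_lt_of_le hy0 with hy | hy
    · -- x > 0, y = 0
      right; right; left
      have h1 := focx hx
      rw [← hy] at h1
      have hxv : x = δ * rα / (2 * c0aa) := by field_simp; linarith
      rw [hγ, ← hy, hxv]
    · -- interior: both FOCs hold
      left
      have h1 := focx hx
      have h2 := focy hy
      set C0 := (!![c0aa, c0ab; c0ab, c0bb] : Matrix (Fin 2) (Fin 2) ℝ) with hC0
      have hmv : C0 *ᵥ γ0s = (δ / 2) • ![rα, rβ] := by
        funext i; fin_cases i <;>
          · simp [hC0, Matrix.mulVec, dotProduct, Fin.sum_univ_two, ← hxdef, ← hydef]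
            linarith
      have hinv : C0⁻¹ * C0 = 1 := Matrix.nonsing_inv_mul _ hC0inv
      calc γ0s = (C0⁻¹ * C0) *ᵥ γ0s := by rw [hinv, Matrix.one_mulVec]
        _ = C0⁻¹ *ᵥ (C0 *ᵥ γ0s) := by rw [← Matrix.mulVec_mulVec]
        _ = C0⁻¹ *ᵥ ((δ / 2) • ![rα, rβ]) := by rw [hmv]
        _ = (δ / 2) • (C0⁻¹ *ᵥ ![rα, rβ]) := Matrix.mulVec_smul _ _ _
end

section
/- In the AI regulation game with quadratic costs, suppose C1 is positive definite. Let θD ≥ 0, let γ0 = (α0, β0) with β0 ≥ 0, and suppose γ1 = (α1, β1) maximizes γ1 ↦ U_D(γ0, γ1) over the regulated feasible set F(γ0, θD) = {(α, β) : α ≥ α0, β ≥ max(β0, θD)} with β1 > θD. Then γ1 also maximizes γ1 ↦ U_D(γ0, γ1) over the unregulated feasible set {(α, β) : α ≥ α0, β ≥ β0}. (Strategies in which the specialist contributes beyond the regulatory floor are exactly unregulated best responses.) -/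
/-!
`U_D(γ0, ·)` is an affine function minus a positive semidefinite quadratic form, hence concave.
Since `β1 > θD`, the floor constraint is slack near `γ1`, so `γ1` is a local maximum on the
convex unregulated feasible set; a local maximum of a concave function on a convex set is global.
-/

open Matrix

open Set

namespace Matrix.PosSemidef

variable {n : Type*} [Fintype n] {A : Matrix n n ℝ}

theorem convexOn_dotProduct_mulVec (hA : A.PosSemidef) :
    ConvexOn ℝ univ fun v => v ⬝ᵥ (A *ᵥ v) := by
  refine ⟨convex_univ, fun x _ y _ a b ha hb hab => ?_⟩
  have hsymm : y ⬝ᵥ (A *ᵥ x) = x ⬝ᵥ (A *ᵥ y) := by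
    rw [dotProduct_mulVec, ← mulVec_transpose, dotProduct_comm]
    simpa using congrArg (fun M => x ⬝ᵥ (M *ᵥ y)) hA.isHermitian.eq
  have hgap : 0 ≤ (x - y) ⬝ᵥ (A *ᵥ (x - y)) := by
    simpa using hA.dotProduct_mulVec_nonneg (x - y)
  simp only [sub_dotProduct, dotProduct_sub, mulVec_sub, hsymm] at hgap
  simp only [smul_eq_mul, add_dotProduct, dotProduct_add, mulVec_add, mulVec_smul,
    smul_dotProduct, dotProduct_smul, hsymm]
  obtain rfl : b = 1 - a := by linarith
  -- the convexity gap is exactly `a (1 - a) · (x - y)ᵀ A (x - y)`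
  nlinarith [mul_nonneg (mul_nonneg ha hb) hgap]

theorem convexOn_dotProduct_mulVec_sub (hA : A.PosSemidef) (c : n → ℝ) :
    ConvexOn ℝ univ fun v => (v - c) ⬝ᵥ (A *ᵥ (v - c)) := by
  simpa [Function.comp_def, neg_add_eq_sub] using
    hA.convexOn_dotProduct_mulVec.translate_right (-c)

end Matrix.PosSemidef

theorem concaveOn_UD (c1aa c1ab c1bb rα rβ δ : ℝ)
    (hC1 : (!![c1aa, c1ab; c1ab, c1bb] : Matrix (Fin 2) (Fin 2) ℝ).PosSemidef)
    (γ0 : Fin 2 → ℝ) : ConcaveOn ℝ univ (UD c1aa c1ab c1bb rα rβ δ γ0) := by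
  have hlinear : ConcaveOn ℝ univ fun γ : Fin 2 → ℝ => (1 - δ) * (rα * γ 0 + rβ * γ 1) :=
    ⟨convex_univ, fun x _ y _ a b _ _ _ => le_of_eq <| by
      simp only [Pi.add_apply, Pi.smul_apply, smul_eq_mul]
      ring⟩
  exact hlinear.sub (hC1.convexOn_dotProduct_mulVec_sub γ0)

theorem contributing_best_response_is_unregulated_best_response_general
    (c1aa c1bb c1ab rα rβ δ θD : ℝ)
    (hC1 : (!![c1aa, c1ab; c1ab, c1bb] : Matrix (Fin 2) (Fin 2) ℝ).PosDef)
    (γ0 γ1 : Fin 2 → ℝ)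
    (hfeas : γ0 0 ≤ γ1 0 ∧ max (γ0 1) θD ≤ γ1 1)
    (hmax : ∀ γ : Fin 2 → ℝ, γ0 0 ≤ γ 0 → max (γ0 1) θD ≤ γ 1 →
      UD c1aa c1ab c1bb rα rβ δ γ0 γ ≤ UD c1aa c1ab c1bb rα rβ δ γ0 γ1)
    (hcontrib : θD < γ1 1) :
    ∀ γ : Fin 2 → ℝ, γ0 0 ≤ γ 0 → γ0 1 ≤ γ 1 →
      UD c1aa c1ab c1bb rα rβ δ γ0 γ ≤ UD c1aa c1ab c1bb rα rβ δ γ0 γ1 := by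
  set unregulated : Set (Fin 2 → ℝ) := {γ | γ0 0 ≤ γ 0 ∧ γ0 1 ≤ γ 1}
  have hconvex : Convex ℝ unregulated :=
    (convex_halfSpace_ge (LinearMap.proj 0).isLinear _).inter
      (convex_halfSpace_ge (LinearMap.proj 1).isLinear _)
  have hmem : γ1 ∈ unregulated := ⟨hfeas.1, (le_max_left _ _).trans hfeas.2⟩
  have hslack : {γ : Fin 2 → ℝ | θD < γ 1} ∈ nhds γ1 :=
    (isOpen_lt continuous_const (continuous_apply 1)).mem_nhds hcontrib
  have hlocal : IsLocalMaxOn (UD c1aa c1ab c1bb rα rβ δ γ0) unregulated γ1 := by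
    filter_upwards [inter_mem_nhdsWithin unregulated hslack]
      with γ ⟨⟨hα, hβ⟩, hθ⟩ using hmax γ hα (max_le hβ hθ.le)
  have hglobal : IsMaxOn (UD c1aa c1ab c1bb rα rβ δ γ0) unregulated γ1 :=
    IsMaxOn.of_isLocalMaxOn_of_concaveOn hmem hlocal
      ((concaveOn_UD _ _ _ _ _ _ hC1.posSemidef γ0).subset (subset_univ _) hconvex)
  exact fun γ hα hβ => hglobal ⟨hα, hβ⟩

/-- If the specialist's best response over the regulated feasible set contributes
strictly beyond the regulatory floor (`β1 > θD`), then it is also a best response over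
the unregulated feasible set. -/
theorem contributing_best_response_is_unregulated_best_response
    (c1aa c1bb c1ab rα rβ δ θD : ℝ)
    (hc1aa : 0 < c1aa) (hc1bb : 0 < c1bb)
    (hrα : 0 < rα) (hrβ : 0 < rβ) (hδ0 : 0 < δ) (hδ1 : δ < 1)
    (hC1 : (!![c1aa, c1ab; c1ab, c1bb] : Matrix (Fin 2) (Fin 2) ℝ).PosDef)
    (hθD : 0 ≤ θD)
    (γ0 γ1 : Fin 2 → ℝ) (hβ0 : 0 ≤ γ0 1)
    (hfeas : γ0 0 ≤ γ1 0 ∧ max (γ0 1) θD ≤ γ1 1)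
    (hmax : ∀ γ : Fin 2 → ℝ, γ0 0 ≤ γ 0 → max (γ0 1) θD ≤ γ 1 →
      UD c1aa c1ab c1bb rα rβ δ γ0 γ ≤ UD c1aa c1ab c1bb rα rβ δ γ0 γ1)
    (hcontrib : θD < γ1 1) :
    ∀ γ : Fin 2 → ℝ, γ0 0 ≤ γ 0 → γ0 1 ≤ γ 1 →
      UD c1aa c1ab c1bb rα rβ δ γ0 γ ≤ UD c1aa c1ab c1bb rα rβ δ γ0 γ1 :=
  contributing_best_response_is_unregulated_best_response_general c1aa c1bb c1ab rα rβ δ θD hC1 γ0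
    γ1 hfeas hmax hcontrib
end
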